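/- Let φ be an exponential map on an integral domain A over a field k. Extend φ to a homomorphism φ : Frac(A) → Frac(A[U]) by φ(a b^{−1}) = φ(a) φ(b)^{−1}, and let Frac(A)^φ = {f ∈ Frac(A) | φ(f) = f}. Then Frac(A)^φ equals the fraction field of A^φ viewed inside Frac(A), i.e., Frac(A)^φ = Frac(A^φ). -/

import Mathlib

open Polynomial

/-- An exponential map on a `k`-algebra `A`: a `k`-algebra homomorphism `φ : A → A[U]`
such that evaluating at `U = 0` is the identity and `φ_S φ_U = φ_{S+U}`. -/
def IsExpMap {k A : Type*} [CommSemiring k] [CommSemiring A] [Algebra k A]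
    (φ : A →ₐ[k] A[X]) : Prop :=
  (∀ a : A, (φ a).eval 0 = a) ∧
  (∀ a : A,
    eval₂ ((mapRingHom (C : A →+* A[X])).comp (φ : A →+* A[X])) (C X) (φ a)
      = eval₂ ((C : A[X] →+* A[X][X]).comp (C : A →+* A[X])) (X + C X) (φ a))

/-- The ring of `φ`-invariants `A^φ = {a : A | φ a = a}`. -/
noncomputable def expInv {k A : Type*} [CommSemiring k] [CommSemiring A] [Algebra k A]
    (φ : A →ₐ[k] A[X]) : Subalgebra k A :=
  AlgHom.equalizer φ (IsScalarTower.toAlgHom k A A[X])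

/-- The AK invariant: the intersection of the rings of invariants of all exponential maps. -/
noncomputable def AK (k A : Type*) [CommSemiring k] [CommSemiring A] [Algebra k A] : Subalgebra k A :=
  ⨅ φ ∈ {ψ : A →ₐ[k] A[X] | IsExpMap ψ}, expInv φ

/-!
`φ` is injective, since evaluating at `U = 0` recovers `a`. Comparing coefficients in
`φ_S φ_U = φ_{S+U}` gives `φ((φ a)_n) = Σ_j binom(n+j, j) (φ a)_{n+j} U^j`, so the leading
coefficient of `φ a` is invariant. If `a / b` is invariant then `φ(a) b = a φ(b)` in `A[U]`, and
taking leading coefficients gives `a / b = lc(φ a) / lc(φ b)`, a quotient of invariants.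
-/

lemma IsFractionRing.algebraMap_div_eq_algebraMap_div_iff {R K : Type*} [CommRing R] [Field K]
    [Algebra R K] [IsFractionRing R K] {a b c d : R} (hb : b ≠ 0) (hd : d ≠ 0) :
    algebraMap R K a / algebraMap R K b = algebraMap R K c / algebraMap R K d ↔
      a * d = c * b := by
  have hinj := IsFractionRing.injective R K
  rw [div_eq_div_iff ((map_ne_zero_iff _ hinj).mpr hb) ((map_ne_zero_iff _ hinj).mpr hd),
    ← map_mul, ← map_mul, hinj.eq_iff]

section CommSemiring

variable {A : Type*} [CommSemiring A]

lemma coeff_coeff_eval₂_mapRingHom_comp (ψ : A →+* A[X]) (p : A[X]) (n j : ℕ) :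
    ((eval₂ ((mapRingHom (C : A →+* A[X])).comp ψ) (C X) p).coeff j).coeff n
      = (ψ (p.coeff n)).coeff j := by
  induction p using Polynomial.induction_on' with
  | add p q hp hq => simp only [eval₂_add, coeff_add, hp, hq, map_add]
  | monomial i c =>
    rw [eval₂_monomial, ← C_pow, coeff_mul_C, coeff_monomial]
    by_cases h : i = n
    · simp [coeff_X_pow, h]
    · simp [coeff_X_pow, h, Ne.symm h]

lemma coeff_coeff_eval₂_X_add_C_X (p : A[X]) (n j : ℕ) :
    ((eval₂ ((C : A[X] →+* A[X][X]).comp C) (X + C X) p).coeff j).coeff n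
      = (n + j).choose j * p.coeff (n + j) := by
  induction p using Polynomial.induction_on' with
  | add p q hp hq => simp only [eval₂_add, coeff_add, hp, hq, mul_add]
  | monomial i c =>
    rw [eval₂_monomial, RingHom.comp_apply, coeff_C_mul, coeff_X_add_C_pow, ← C_eq_natCast,
      coeff_C_mul, coeff_mul_C, coeff_X_pow, coeff_monomial]
    rcases lt_or_ge i j with hij | hji
    · simp [Nat.choose_eq_zero_of_lt hij]
      omega
    · obtain ⟨m, rfl⟩ := Nat.exists_eq_add_of_le' hji
      by_cases h : m = n
      · simp [h, mul_comm]
      · simp [h, Ne.symm h]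

end CommSemiring

section

variable {k A : Type*} [CommSemiring k] [CommSemiring A] [Algebra k A] {φ : A →ₐ[k] A[X]}

lemma mem_expInv_iff {a : A} : a ∈ expInv φ ↔ φ a = C a := by
  rw [expInv, AlgHom.mem_equalizer, IsScalarTower.toAlgHom_apply, Polynomial.algebraMap_eq]

namespace IsExpMap

lemma injective (hφ : IsExpMap φ) : Function.Injective φ := fun a b h => by
  rw [← hφ.1 a, ← hφ.1 b, h]

lemma coeff_apply_coeff (hφ : IsExpMap φ) (a : A) (n j : ℕ) :
    (φ ((φ a).coeff n)).coeff j = (n + j).choose j * (φ a).coeff (n + j) := by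
  simpa only [coeff_coeff_eval₂_mapRingHom_comp, coeff_coeff_eval₂_X_add_C_X,
    RingHom.coe_coe] using
    congrArg (fun q : A[X][X] => (q.coeff j).coeff n) (hφ.2 a)

lemma leadingCoeff_mem_expInv (hφ : IsExpMap φ) (a : A) : (φ a).leadingCoeff ∈ expInv φ := by
  rw [mem_expInv_iff]
  ext j
  rw [leadingCoeff, hφ.coeff_apply_coeff, coeff_C]
  rcases j with _ | j
  · simp
  · rw [coeff_eq_zero_of_natDegree_lt (by omega), mul_zero, if_neg j.succ_ne_zero]

end IsExpMap

end

namespace IsExpMap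

variable {k A : Type*} [CommSemiring k] [CommRing A] [IsDomain A] [Algebra k A]
  {φ : A →ₐ[k] A[X]}

lemma exists_mem_expInv_mul_eq (hφ : IsExpMap φ) {a b : A} (hb : b ≠ 0)
    (h : φ a * C b = C a * φ b) :
    ∃ a' b' : A, a' ∈ expInv φ ∧ b' ∈ expInv φ ∧ b' ≠ 0 ∧ a * b' = a' * b := by
  have hφb : φ b ≠ 0 := (map_ne_zero_iff _ hφ.injective).mpr hb
  refine ⟨_, _, hφ.leadingCoeff_mem_expInv a, hφ.leadingCoeff_mem_expInv b,
    leadingCoeff_ne_zero.mpr hφb, ?_⟩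
  simpa only [leadingCoeff_mul, leadingCoeff_C, mul_comm] using (congrArg leadingCoeff h).symm

end IsExpMap

/-- Extend an exponential map `φ` on a domain `A` to a homomorphism
`φ' : Frac(A) → Frac(A[U])` by `φ'(a b⁻¹) = φ(a) φ(b)⁻¹`, and let
`ι : Frac(A) → Frac(A[U])` be the canonical embedding (extending `a ↦ a`). Then the
`φ'`-invariant elements of `Frac(A)` are exactly the quotients of elements of `A^φ`,
i.e. `Frac(A)^φ = Frac(A^φ)`. -/
theorem statement12 {k A : Type*} [Field k] [CommRing A] [IsDomain A] [Algebra k A]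
    (φ : A →ₐ[k] A[X]) (hφ : IsExpMap φ)
    (φ' : FractionRing A →+* FractionRing A[X])
    (hφ' : ∀ a : A, φ' (algebraMap A (FractionRing A) a)
        = algebraMap A[X] (FractionRing A[X]) (φ a))
    (ι : FractionRing A →+* FractionRing A[X])
    (hι : ∀ a : A, ι (algebraMap A (FractionRing A) a)
        = algebraMap A[X] (FractionRing A[X]) (C a)) :
    ∀ f : FractionRing A, φ' f = ι f ↔
      ∃ a b : A, a ∈ expInv φ ∧ b ∈ expInv φ ∧ b ≠ 0 ∧
        f = algebraMap A (FractionRing A) a / algebraMap A (FractionRing A) b := by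
  intro f
  constructor
  · intro h
    obtain ⟨a, b, hb, rfl⟩ := IsFractionRing.div_surjective A f
    have hb0 : b ≠ 0 := nonZeroDivisors.ne_zero hb
    rw [map_div₀, map_div₀, hφ', hφ', hι, hι,
      IsFractionRing.algebraMap_div_eq_algebraMap_div_iff
        ((map_ne_zero_iff _ hφ.injective).mpr hb0) (C_ne_zero.mpr hb0)] at h
    obtain ⟨a', b', ha', hb', hb'0, hab⟩ := hφ.exists_mem_expInv_mul_eq hb0 h
    exact ⟨a', b', ha', hb', hb'0,
      (IsFractionRing.algebraMap_div_eq_algebraMap_div_iff hb0 hb'0).mpr hab⟩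
  · rintro ⟨a, b, ha, hb, -, rfl⟩
    rw [map_div₀, map_div₀, hφ', hφ', hι, hι, mem_expInv_iff.mp ha, mem_expInv_iff.mp hb]
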